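/- arXiv:0911.3522 — 2 statements merged into one kernel-verified Lean document; each statement's English description precedes it below -/
import Mathlib

section
/- For any generalized ring A and any h-ideal 𝔞 of A, one has I(V(𝔞)) = √𝔞; that is, the intersection of all prime h-ideals containing 𝔞 equals {a ∈ A_{[1]} : aⁿ ∈ 𝔞 for some n > 0}. -/
open scoped Classical

noncomputable section

/-! ### Partially defined maps of finite sets -/

/-- Composition of partially defined maps of sets (`Set_•`). -/
def pcomp {X Y Z : Type} (g : Y → Option Z) (f : X → Option Y) : X → Option Z :=
  fun x => (f x).bind g

/-- The fiber of a partially defined map over a point of the target. -/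
abbrev pfib {X Y : Type} (f : X → Option Y) (y : Y) : Type := {x : X // f x = some y}

/-- The fiber of the identity partial map over `x` is a singleton. -/
def idFiberEquiv {X : Type} (x : X) : Fin 1 ≃ pfib (fun x' : X => some x') x where
  toFun _ := ⟨x, rfl⟩
  invFun _ := 0
  left_inv _ := Subsingleton.elim _ _
  right_inv p := Subtype.ext (Option.some.inj p.2).symm

/-- The fiber of the constant (total) map to the point `[1]` is everything. -/
def constFiberEquiv (X : Type) (z : Fin 1) :
    X ≃ pfib (fun _ : X => some (0 : Fin 1)) z where
  toFun x := ⟨x, congrArg some (Subsingleton.elim (0 : Fin 1) z)⟩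
  invFun p := p.1
  left_inv _ := rfl
  right_inv p := rfl

/-- The fiber of (the graph of) a bijection is a singleton. -/
def equivFiberEquiv {X Y : Type} (e : X ≃ Y) (y : Y) :
    Fin 1 ≃ pfib (fun x : X => some (e x)) y where
  toFun _ := ⟨e.symm y, congrArg some (e.apply_symm_apply y)⟩
  invFun _ := 0
  left_inv _ := Subsingleton.elim _ _
  right_inv p := Subtype.ext ((Equiv.symm_apply_eq e).mpr (Option.some.inj p.2).symm)

/-- The fiber of the map `[1] → X` with image `{x}` over `x' = x` is a singleton. -/
def pointFiberEquiv {X : Type} {x x' : X} (h : x = x') :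
    Fin 1 ≃ pfib (fun _ : Fin 1 => some x) x' where
  toFun z := ⟨z, congrArg some h⟩
  invFun p := p.1
  left_inv _ := rfl
  right_inv p := rfl

/-- Restriction of `f` to the fiber of `pcomp g f` over `z`, as a partial map into
the fiber of `g` over `z`. -/
def resMap {X Y Z : Type} (g : Y → Option Z) (f : X → Option Y) (z : Z) :
    pfib (pcomp g f) z → Option (pfib g z) :=
  fun x => (f x.1).bind fun y => if h : g y = some z then some ⟨y, h⟩ else none

/-- Identification of the fibers of the restriction `resMap g f z` with fibers of `f`. -/
def resFiberEquiv {X Y Z : Type} (g : Y → Option Z) (f : X → Option Y) (z : Z)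
    (p : pfib g z) : pfib f p.1 ≃ pfib (resMap g f z) p where
  toFun x := ⟨⟨x.1, by show (f x.1).bind g = some z; rw [x.2, Option.bind_some, p.2]⟩, by
    show (f x.1).bind _ = some p
    rw [x.2, Option.bind_some, dif_pos p.2]⟩
  invFun q := ⟨q.1.1, by
    have h := q.2
    unfold resMap at h
    rcases hf : f q.1.1 with _ | y
    · rw [hf, Option.bind_none] at h
      exact nomatch h
    · rw [hf, Option.bind_some] at h
      by_cases hg : g y = some z
      · rw [dif_pos hg] at h
        have hy : y = p.1 := congrArg Subtype.val (Option.some.inj h)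
        exact congrArg some hy
      · rw [dif_neg hg] at h
        exact nomatch h⟩
  left_inv x := Subtype.ext rfl
  right_inv q := Subtype.ext (Subtype.ext rfl)

/-! ### Fibered products -/

/-- The fibered product of two partial maps `g : Z ⇀ Y` and `f : X ⇀ Y`. -/
abbrev FP {X Y Z : Type} (g : Z → Option Y) (f : X → Option Y) : Type :=
  {p : Z × X // ∃ y : Y, g p.1 = some y ∧ f p.2 = some y}

/-- First projection of the fibered product, as a partial map. -/
def fpFst {X Y Z : Type} (g : Z → Option Y) (f : X → Option Y) : FP g f → Option Z :=
  fun p => some p.1.1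

/-- Second projection of the fibered product, as a partial map. -/
def fpSnd {X Y Z : Type} (g : Z → Option Y) (f : X → Option Y) : FP g f → Option X :=
  fun p => some p.1.2

/-- Identification of the fiber of the second projection of `Z ×_Y X` over `x`
with the fiber of `g` over `f x`. -/
def fpFiberSnd {X Y Z : Type} (g : Z → Option Y) (f : X → Option Y) {x : X} {y : Y}
    (hy : f x = some y) : pfib g y ≃ pfib (fpSnd g f) x where
  toFun w := ⟨⟨(w.1, x), ⟨y, w.2, hy⟩⟩, rfl⟩
  invFun q := ⟨q.1.1.1, by
    obtain ⟨y', hg, hf⟩ := q.1.2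
    have hx : q.1.1.2 = x := Option.some.inj q.2
    rw [hx] at hf
    have hyy : y' = y := Option.some.inj (hf.symm.trans hy)
    rw [hyy] at hg
    exact hg⟩
  left_inv w := Subtype.ext rfl
  right_inv q := by
    apply Subtype.ext
    apply Subtype.ext
    have hx : q.1.1.2 = x := Option.some.inj q.2
    exact Prod.ext rfl hx.symm

/-- Identification of the fiber of the first projection of `Z ×_Y X` over `z`
with the fiber of `f` over `g z`. -/
def fpFiberFst {X Y Z : Type} (g : Z → Option Y) (f : X → Option Y) {z : Z} {y : Y}
    (hy : g z = some y) : pfib f y ≃ pfib (fpFst g f) z where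
  toFun w := ⟨⟨(z, w.1), ⟨y, hy, w.2⟩⟩, rfl⟩
  invFun q := ⟨q.1.1.2, by
    obtain ⟨y', hg, hf⟩ := q.1.2
    have hz : q.1.1.1 = z := Option.some.inj q.2
    rw [hz] at hg
    have hyy : y' = y := Option.some.inj (hg.symm.trans hy)
    rw [hyy] at hf
    exact hf⟩
  left_inv w := Subtype.ext rfl
  right_inv q := by
    apply Subtype.ext
    apply Subtype.ext
    have hz : q.1.1.1 = z := Option.some.inj q.2
    exact Prod.ext hz.symm rfl
/-! ### Generalized rings

A generalized ring assigns to each finite set `X` a pointed set `A X`, functorially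
with respect to bijections (and hence, via the operations and units, with respect to
all partial bijections of finite sets), together with operations of multiplication
`∘ : A Y × A f → A X` and contraction `( , ) : A X × A f → A Y` for every partially
defined map `f : X ⇀ Y`, where `A f = ∏_{y ∈ Y} A (f⁻¹ y)`, and a unit `1 ∈ A [1]`,
subject to the axioms of associativity, left- and right-adjunction, left- and
right-linearity, and the unit axioms. -/

/-- The data underlying a generalized ring. -/
structure GenRingData where
  /-- the pointed set attached to a finite set `X` -/
  A : (X : Type) → [inst : Finite X] → Type
  /-- the base point `0_X ∈ A_X` -/
  zero : (X : Type) → [inst : Finite X] → A X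
  /-- the unit `1 ∈ A_{[1]}` -/
  one : A (Fin 1)
  /-- functoriality with respect to bijections of finite sets -/
  map : {X Y : Type} → [inst : Finite X] → [inst' : Finite Y] → (X ≃ Y) → A X → A Y
  /-- multiplication `∘ : A_Y × A_f → A_X` for a partially defined map `f : X ⇀ Y` -/
  mul : {X Y : Type} → [inst : Finite X] → [inst' : Finite Y] → (f : X → Option Y) →
      A Y → ((y : Y) → A (pfib f y)) → A X
  /-- contraction `( , ) : A_X × A_f → A_Y` for a partially defined map `f : X ⇀ Y` -/
  contr : {X Y : Type} → [inst : Finite X] → [inst' : Finite Y] → (f : X → Option Y) →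
      A X → ((y : Y) → A (pfib f y)) → A Y

namespace GenRingData

variable (R : GenRingData)

/-- The unit family `1_{id_X} ∈ A_{id_X}`. -/
def oneId (X : Type) [Finite X] : (x : X) → R.A (pfib (fun x' : X => some x') x) :=
  fun x => R.map (idFiberEquiv x) R.one

/-- The monoid operation `a ∘ b` on `A_{[1]}`. -/
def op (a b : R.A (Fin 1)) : R.A (Fin 1) :=
  R.mul (fun z : Fin 1 => some z) a (fun z => R.map (idFiberEquiv z) b)

/-- The `n`-fold power `a ∘ ⋯ ∘ a` in the monoid `A_{[1]}` (with `a⁰ = 1`). -/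
def opPow (a : R.A (Fin 1)) : ℕ → R.A (Fin 1)
  | 0 => R.one
  | n + 1 => R.op a (opPow a n)

/-- The left action `s ∘ a` of `A_{[1]}` on `A_X` (operation (1.2.5)). -/
def lact {X : Type} [Finite X] (s : R.A (Fin 1)) (a : R.A X) : R.A X :=
  R.mul (fun _ : X => some (0 : Fin 1)) s (fun z => R.map (constFiberEquiv X z) a)

/-- The pairing `(a, d) : A_X × A_X → A_{[1]}` (operation (1.2.6)). -/
def pair {X : Type} [Finite X] (a d : R.A X) : R.A (Fin 1) :=
  R.contr (fun _ : X => some (0 : Fin 1)) a (fun z => R.map (constFiberEquiv X z) d)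

/-- The right (diagonal) action `b ∘ c` of `(A_{[1]})^X` on `A_X` (operation (1.2.7)). -/
def ract {X : Type} [Finite X] (b : R.A X) (c : X → R.A (Fin 1)) : R.A X :=
  R.mul (fun x : X => some x) b (fun x => R.map (idFiberEquiv x) (c x))

/-- The involution `a ↦ aᵗ = (1, a)` of `A_{[1]}`. -/
def adj (a : R.A (Fin 1)) : R.A (Fin 1) := R.pair R.one a

/-- The element `(a, 1_{j_x}) ∈ A_X` obtained from `a ∈ A_{[1]}` via the
inclusion `j_x : {x} ↪ X`; for `a = 1` this is the image `1_x` of the unit. -/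
def pointElt (X : Type) [Finite X] (x : X) (a : R.A (Fin 1)) : R.A X :=
  R.contr (fun _ : Fin 1 => some x) a
    (fun x' => if h : x = x' then R.map (pointFiberEquiv h) R.one else R.zero _)

/-- The extended multiplication `A_g × A_f → A_{g∘f}`, defined fiberwise. -/
def emul {X Y Z : Type} [Finite X] [Finite Y] [Finite Z]
    (g : Y → Option Z) (f : X → Option Y)
    (c : (z : Z) → R.A (pfib g z)) (b : (y : Y) → R.A (pfib f y)) :
    (z : Z) → R.A (pfib (pcomp g f) z) :=
  fun z => R.mul (resMap g f z) (c z) (fun p => R.map (resFiberEquiv g f z p) (b p.1))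

/-- The extended contraction `A_{g∘f} × A_f → A_g`, defined fiberwise. -/
def econtr {X Y Z : Type} [Finite X] [Finite Y] [Finite Z]
    (g : Y → Option Z) (f : X → Option Y)
    (a : (z : Z) → R.A (pfib (pcomp g f) z)) (b : (y : Y) → R.A (pfib f y)) :
    (z : Z) → R.A (pfib g z) :=
  fun z => R.contr (resMap g f z) (a z) (fun p => R.map (resFiberEquiv g f z p) (b p.1))

/-- The pullback `ã ∈ A_{g̃}` of `a ∈ A_g` along the fibered product (used in
the right-linearity axiom). -/
def atilde {X Y Z : Type} [Finite X] [Finite Y] [Finite Z]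
    (g : Z → Option Y) (f : X → Option Y) (a : (y : Y) → R.A (pfib g y)) :
    (x : X) → R.A (pfib (fpSnd g f) x) :=
  fun x =>
    match hfx : f x with
    | some y => R.map (fpFiberSnd g f hfx) (a y)
    | none => R.zero _

/-- The pullback `c̃ ∈ A_{f̃}` of `c ∈ A_f` along the fibered product (used in
the right-linearity axiom). -/
def ctilde {X Y Z : Type} [Finite X] [Finite Y] [Finite Z]
    (g : Z → Option Y) (f : X → Option Y) (c : (y : Y) → R.A (pfib f y)) :
    (z : Z) → R.A (pfib (fpFst g f) z) :=
  fun z =>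
    match hgz : g z with
    | some y => R.map (fpFiberFst g f hgz) (c y)
    | none => R.zero _

end GenRingData

/-- A generalized ring: the data of `GenRingData` subject to the axioms
(pointedness, functoriality, zero laws, associativity, left/right adjunction,
left/right linearity, and the unit axioms, the latter in their reduced form over
the one-point base, which is equivalent to the general form). -/
structure GenRing where
  /-- the underlying data -/
  data : GenRingData
  /-- `A_∅ = {0}` -/
  isEmpty_eq_zero : ∀ (X : Type) [Finite X] [IsEmpty X] (a : data.A X), a = data.zero X
  /-- functoriality: identity -/
  map_refl : ∀ (X : Type) [Finite X] (a : data.A X), data.map (Equiv.refl X) a = a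
  /-- functoriality: composition -/
  map_trans : ∀ {X Y Z : Type} [Finite X] [Finite Y] [Finite Z] (e : X ≃ Y) (e' : Y ≃ Z)
      (a : data.A X), data.map (e.trans e') a = data.map e' (data.map e a)
  /-- functoriality: the maps are pointed -/
  map_zero : ∀ {X Y : Type} [Finite X] [Finite Y] (e : X ≃ Y),
      data.map e (data.zero X) = data.zero Y
  /-- `0 ∘ b = 0` -/
  mul_zero_left : ∀ {X Y : Type} [Finite X] [Finite Y] (f : X → Option Y)
      (b : (y : Y) → data.A (pfib f y)), data.mul f (data.zero Y) b = data.zero X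
  /-- `a ∘ 0_f = 0` -/
  mul_zero_right : ∀ {X Y : Type} [Finite X] [Finite Y] (f : X → Option Y) (a : data.A Y),
      data.mul f a (fun y => data.zero (pfib f y)) = data.zero X
  /-- `(0, b) = 0` -/
  contr_zero_left : ∀ {X Y : Type} [Finite X] [Finite Y] (f : X → Option Y)
      (b : (y : Y) → data.A (pfib f y)), data.contr f (data.zero X) b = data.zero Y
  /-- `(a, 0_f) = 0` -/
  contr_zero_right : ∀ {X Y : Type} [Finite X] [Finite Y] (f : X → Option Y) (a : data.A X),
      data.contr f a (fun y => data.zero (pfib f y)) = data.zero Y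
  /-- associativity: `d ∘ (c ∘ b) = (d ∘ c) ∘ b` -/
  assoc : ∀ {X Y Z : Type} [Finite X] [Finite Y] [Finite Z]
      (g : Y → Option Z) (f : X → Option Y) (d : data.A Z)
      (c : (z : Z) → data.A (pfib g z)) (b : (y : Y) → data.A (pfib f y)),
      data.mul (pcomp g f) d (data.emul g f c b) = data.mul f (data.mul g d c) b
  /-- left-adjunction: `(d, a ∘ c) = ((d, c), a)` -/
  left_adj : ∀ {X Y Z : Type} [Finite X] [Finite Y] [Finite Z]
      (g : Y → Option Z) (f : X → Option Y) (d : data.A X)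
      (a : (z : Z) → data.A (pfib g z)) (c : (y : Y) → data.A (pfib f y)),
      data.contr (pcomp g f) d (data.emul g f a c) = data.contr g (data.contr f d c) a
  /-- right-adjunction: `(d ∘ c, a) = (d, (a, c))` -/
  right_adj : ∀ {X Y Z : Type} [Finite X] [Finite Y] [Finite Z]
      (g : Y → Option Z) (f : X → Option Y) (d : data.A Y)
      (a : (z : Z) → data.A (pfib (pcomp g f) z)) (c : (y : Y) → data.A (pfib f y)),
      data.contr (pcomp g f) (data.mul f d c) a = data.contr g d (data.econtr g f a c)
  /-- left-linearity: `(d ∘ a, c) = d ∘ (a, c)` -/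
  left_lin : ∀ {X Y Z : Type} [Finite X] [Finite Y] [Finite Z]
      (g : Y → Option Z) (f : X → Option Y) (d : data.A Z)
      (a : (z : Z) → data.A (pfib (pcomp g f) z)) (c : (y : Y) → data.A (pfib f y)),
      data.contr f (data.mul (pcomp g f) d a) c = data.mul g d (data.econtr g f a c)
  /-- right-linearity: `(d, c) ∘ a = (d ∘ ã, c̃)`, with `ã`, `c̃` the pullbacks
  along the fibered product `Z ×_Y X` -/
  right_lin : ∀ {X Y Z : Type} [Finite X] [Finite Y] [Finite Z]
      (g : Z → Option Y) (f : X → Option Y) (d : data.A X)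
      (a : (y : Y) → data.A (pfib g y)) (c : (y : Y) → data.A (pfib f y)),
      data.mul g (data.contr f d c) a
        = data.contr (fpFst g f) (data.mul (fpSnd g f) d (data.atilde g f a))
            (data.ctilde g f c)
  /-- unit axiom: `a ∘ 1_{id_X} = a` -/
  mul_one_id : ∀ (X : Type) [Finite X] (a : data.A X),
      data.mul (fun x : X => some x) a (data.oneId X) = a
  /-- unit axiom: `1 ∘ a = a` -/
  one_lact : ∀ (X : Type) [Finite X] (a : data.A X), data.lact data.one a = a
  /-- unit axiom: `(a, 1_{id_X}) = a` -/
  contr_one_id : ∀ (X : Type) [Finite X] (a : data.A X),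
      data.contr (fun x : X => some x) a (data.oneId X) = a
  /-- unit axiom (1.8.11): `(a, 1_f) = f_A(a)` for a bijection `f = e` -/
  map_eq_contr : ∀ {X Y : Type} [Finite X] [Finite Y] (e : X ≃ Y) (a : data.A X),
      data.contr (fun x : X => some (e x)) a
        (fun y => data.map (equivFiberEquiv e y) data.one) = data.map e a
  /-- unit axiom (1.8.11): `a ∘ 1_{fᵗ} = f_A(a)` for a bijection `f = e` -/
  map_eq_mul : ∀ {X Y : Type} [Finite X] [Finite Y] (e : X ≃ Y) (a : data.A X),
      data.mul (fun y : Y => some (e.symm y)) a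
        (fun x => data.map (equivFiberEquiv e.symm x) data.one) = data.map e a
namespace GenRing

variable (R : GenRing)

/-- An `h`-ideal of a generalized ring: a subset `I ⊆ A_{[1]}` such that
`(b ∘ c, d) ∈ I` for all finite `X`, all `b, d ∈ A_X` and all `c ∈ I^X ⊆ (A_{[1]})^X`. -/
def IsHIdeal (I : Set (R.data.A (Fin 1))) : Prop :=
  ∀ (X : Type) [Finite X], ∀ (b d : R.data.A X) (c : X → R.data.A (Fin 1)),
    (∀ x, c x ∈ I) → R.data.pair (R.data.ract b c) d ∈ I

/-- A prime of a generalized ring: a proper `h`-ideal `P` whose complement is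
closed under the multiplication of `A_{[1]}`. -/
def IsPrimeH (P : Set (R.data.A (Fin 1))) : Prop :=
  R.IsHIdeal P ∧ R.data.one ∉ P ∧
    ∀ a b : R.data.A (Fin 1), R.data.op a b ∈ P → a ∈ P ∨ b ∈ P

end GenRing

/-- The spectrum of a generalized ring: the set of its primes. -/
structure SpecG (R : GenRing) where
  /-- the underlying prime `h`-ideal -/
  I : Set (R.data.A (Fin 1))
  /-- it is prime -/
  prime : R.IsPrimeH I

namespace GenRing

variable (R : GenRing)

/-- The basic open set `D_a = {𝔭 : a ∉ 𝔭}` of the Zariski topology. -/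
def basicOpen (a : R.data.A (Fin 1)) : Set (SpecG R) := {p | a ∉ p.I}

/-- The closed set `V(s) = {𝔭 : 𝔭 ⊇ s}` of the Zariski topology. -/
def zeroLocus (s : Set (R.data.A (Fin 1))) : Set (SpecG R) := {p | s ⊆ p.I}

/-- The Zariski topology on the spectrum, generated by the basic open sets. -/
instance : TopologicalSpace (SpecG R) :=
  TopologicalSpace.generateFrom {U | ∃ a : R.data.A (Fin 1), U = R.basicOpen a}

end GenRing

/-- A homomorphism of generalized rings: a (pointed, natural) family of maps
preserving multiplication, contraction and the unit. -/
structure GenRingHom (R S : GenRing) where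
  /-- the underlying family of maps -/
  app : (X : Type) → [inst : Finite X] → R.data.A X → S.data.A X
  /-- zero is preserved -/
  app_zero : ∀ (X : Type) [Finite X], app X (R.data.zero X) = S.data.zero X
  /-- the unit is preserved -/
  app_one : app (Fin 1) R.data.one = S.data.one
  /-- naturality with respect to bijections -/
  app_map : ∀ {X Y : Type} [Finite X] [Finite Y] (e : X ≃ Y) (a : R.data.A X),
      app Y (R.data.map e a) = S.data.map e (app X a)
  /-- multiplication is preserved -/
  app_mul : ∀ {X Y : Type} [Finite X] [Finite Y] (f : X → Option Y)
      (a : R.data.A Y) (b : (y : Y) → R.data.A (pfib f y)),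
      app X (R.data.mul f a b) = S.data.mul f (app Y a) (fun y => app (pfib f y) (b y))
  /-- contraction is preserved -/
  app_contr : ∀ {X Y : Type} [Finite X] [Finite Y] (f : X → Option Y)
      (a : R.data.A X) (b : (y : Y) → R.data.A (pfib f y)),
      app Y (R.data.contr f a b) = S.data.contr f (app X a) (fun y => app (pfib f y) (b y))

namespace GenRingHom

variable {R S : GenRing} (φ : GenRingHom R S)

theorem app_op (a b : R.data.A (Fin 1)) :
    φ.app (Fin 1) (R.data.op a b) = S.data.op (φ.app (Fin 1) a) (φ.app (Fin 1) b) := by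
  unfold GenRingData.op
  rw [φ.app_mul]
  congr 1
  funext z
  rw [φ.app_map]

theorem app_ract {X : Type} [Finite X] (b : R.data.A X) (c : X → R.data.A (Fin 1)) :
    φ.app X (R.data.ract b c) = S.data.ract (φ.app X b) (fun x => φ.app (Fin 1) (c x)) := by
  unfold GenRingData.ract
  rw [φ.app_mul]
  congr 1
  funext x
  rw [φ.app_map]

theorem app_pair {X : Type} [Finite X] (a d : R.data.A X) :
    φ.app (Fin 1) (R.data.pair a d) = S.data.pair (φ.app X a) (φ.app X d) := by
  unfold GenRingData.pair
  rw [φ.app_contr]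
  congr 1
  funext z
  rw [φ.app_map]

theorem app_lact {X : Type} [Finite X] (s : R.data.A (Fin 1)) (a : R.data.A X) :
    φ.app X (R.data.lact s a) = S.data.lact (φ.app (Fin 1) s) (φ.app X a) := by
  unfold GenRingData.lact
  rw [φ.app_mul]
  congr 1
  funext z
  rw [φ.app_map]

/-- The map `spec(φ) : spec(S) → spec(R)`, `𝔮 ↦ φ_{[1]}⁻¹(𝔮)`, induced by a
homomorphism of generalized rings `φ : R → S`. -/
def specMap (q : SpecG S) : SpecG R where
  I := φ.app (Fin 1) ⁻¹' q.I
  prime := by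
    refine ⟨?_, ?_, ?_⟩
    · intro X _ b d c hc
      show φ.app (Fin 1) (R.data.pair (R.data.ract b c) d) ∈ q.I
      rw [φ.app_pair, φ.app_ract]
      exact q.prime.1 X (φ.app X b) (φ.app X d) (fun x => φ.app (Fin 1) (c x)) hc
    · show φ.app (Fin 1) R.data.one ∉ q.I
      rw [φ.app_one]
      exact q.prime.2.1
    · intro a b hab
      have h : S.data.op (φ.app (Fin 1) a) (φ.app (Fin 1) b) ∈ q.I := by
        rw [← φ.app_op]; exact hab
      exact q.prime.2.2 _ _ h

end GenRingHom

/-- An equivalence ideal of a generalized ring: a family of equivalence relations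
on the sets `A_X` respecting the operations of multiplication and contraction. -/
structure EqvIdeal (R : GenRing) where
  /-- the family of relations -/
  rel : (X : Type) → [inst : Finite X] → R.data.A X → R.data.A X → Prop
  refl : ∀ (X : Type) [Finite X] (a : R.data.A X), rel X a a
  symm : ∀ (X : Type) [Finite X] {a b : R.data.A X}, rel X a b → rel X b a
  trans : ∀ (X : Type) [Finite X] {a b c : R.data.A X}, rel X a b → rel X b c → rel X a c
  /-- `a ∼ a'` implies `a ∘ b ∼ a' ∘ b` -/
  mul_left : ∀ {X Y : Type} [Finite X] [Finite Y] (f : X → Option Y) {a a' : R.data.A Y}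
      (b : (y : Y) → R.data.A (pfib f y)),
      rel Y a a' → rel X (R.data.mul f a b) (R.data.mul f a' b)
  /-- `b ∼ b'` (componentwise) implies `a ∘ b ∼ a ∘ b'` -/
  mul_right : ∀ {X Y : Type} [Finite X] [Finite Y] (f : X → Option Y) (a : R.data.A Y)
      {b b' : (y : Y) → R.data.A (pfib f y)},
      (∀ y, rel (pfib f y) (b y) (b' y)) → rel X (R.data.mul f a b) (R.data.mul f a b')
  /-- `a ∼ a'` implies `(a, b) ∼ (a', b)` -/
  contr_left : ∀ {X Y : Type} [Finite X] [Finite Y] (f : X → Option Y) {a a' : R.data.A X}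
      (b : (y : Y) → R.data.A (pfib f y)),
      rel X a a' → rel Y (R.data.contr f a b) (R.data.contr f a' b)
  /-- `b ∼ b'` (componentwise) implies `(a, b) ∼ (a, b')` -/
  contr_right : ∀ {X Y : Type} [Finite X] [Finite Y] (f : X → Option Y) (a : R.data.A X)
      {b b' : (y : Y) → R.data.A (pfib f y)},
      (∀ y, rel (pfib f y) (b y) (b' y)) → rel Y (R.data.contr f a b) (R.data.contr f a b')

namespace GenRing

variable (R : GenRing)

/-- The equivalence ideal `E(I)` generated by an (`h`-)ideal `I`: `a ∼ b` iff the
pair `(a, b)` belongs to every equivalence ideal containing `(i, 0)` for all `i ∈ I`. -/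
def erel (I : Set (R.data.A (Fin 1))) (X : Type) [Finite X] (a b : R.data.A X) : Prop :=
  ∀ ε : EqvIdeal R, (∀ i ∈ I, ε.rel (Fin 1) i (R.data.zero (Fin 1))) → ε.rel X a b

/-- A stable `h`-ideal: an `h`-ideal `I` such that for every pair `(a, b)` in the
equivalence ideal `E(I)` generated by `I` one has `a ∈ I ↔ b ∈ I`. -/
def IsStableHIdeal (I : Set (R.data.A (Fin 1))) : Prop :=
  R.IsHIdeal I ∧ ∀ a b : R.data.A (Fin 1), R.erel I (Fin 1) a b → (a ∈ I ↔ b ∈ I)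

/-- A multiplicative subset of `A_{[1]}`: contains `1`, closed under `∘`,
and stable under the involution. -/
def IsMulSet (S : Set (R.data.A (Fin 1))) : Prop :=
  R.data.one ∈ S ∧ (∀ a ∈ S, ∀ b ∈ S, R.data.op a b ∈ S) ∧
    (∀ a, a ∈ S ↔ R.data.adj a ∈ S)

/-- `φ : R → L` presents `L` as the localization `S⁻¹R` of `R` at the
multiplicative subset `S ⊆ A_{[1]}`: every element of `S` becomes invertible, every
element of `L` is a fraction `φ(a)/φ(s)`, and `φ(a) = φ(b)` iff `s ∘ a = s ∘ b`
for some `s ∈ S`. -/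
def IsLocalizationAt (S : Set (R.data.A (Fin 1))) {L : GenRing} (φ : GenRingHom R L) : Prop :=
  (∀ s ∈ S, ∃ t : L.data.A (Fin 1),
      L.data.op t (φ.app (Fin 1) s) = L.data.one ∧
      L.data.op (φ.app (Fin 1) s) t = L.data.one) ∧
  (∀ (X : Type) [Finite X], ∀ l : L.data.A X, ∃ (a : R.data.A X) (s : R.data.A (Fin 1)),
      s ∈ S ∧ L.data.lact (φ.app (Fin 1) s) l = φ.app X a) ∧
  (∀ (X : Type) [Finite X], ∀ a b : R.data.A X,
      φ.app X a = φ.app X b ↔ ∃ s ∈ S, R.data.lact s a = R.data.lact s b)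

end GenRing

/-!
The monoid `A_{[1]}` is commutative (the involution `aᵗ = (1, a)` turns `∘` into the pairing
`( , )` from either side), every `h`-ideal absorbs `∘`, and for an `h`-ideal `I` the colon
`{t | t ∘ u ∈ I}` is again an `h`-ideal, since `(b ∘ c, d) ∘ u = (b ∘ (c ∘ u), d)`.
So the classical argument applies: by Zorn, an `h`-ideal `M` that is maximal among those
containing `𝔞` and no power of `x` is prime. Indeed, if `u ∘ v ∈ M` with `u, v ∉ M`, the colon
of `M` by `v` contains `u`, so by maximality some `xⁿ ∘ v ∈ M`; then the colon of `M` by `xⁿ`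
contains `v`, so `xᵐ ∘ xⁿ = xᵐ⁺ⁿ ∈ M`.
-/

theorem subsingleton_pfib_of_injective {X Y : Type} {f : X → Option Y}
    (hf : Function.Injective f) (y : Y) : Subsingleton (pfib f y) :=
  ⟨fun a b => Subtype.ext (hf (a.2.trans b.2.symm))⟩

theorem subsingleton_pfib_graph {X Y : Type} (e : X ≃ Y) (y : Y) :
    Subsingleton (pfib (fun x => some (e x)) y) :=
  subsingleton_pfib_of_injective ((Option.some_injective Y).comp e.injective) y

def pfibEquivOfForall {S T : Type} (G : S → Option T) (t : T) (hG : ∀ s, G s = some t) :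
    S ≃ pfib G t where
  toFun s := ⟨s, hG s⟩
  invFun q := q.1
  left_inv _ := rfl
  right_inv _ := rfl

def pcompGraphFiberEquiv {X Y Z : Type} (g : Y → Option Z) (e : X ≃ Y) (z : Z) :
    pfib g z ≃ pfib (pcomp g fun x => some (e x)) z where
  toFun y := ⟨e.symm y.1, by simp [pcomp, y.2]⟩
  invFun x := ⟨e x.1, x.2⟩
  left_inv y := Subtype.ext (e.apply_symm_apply y.1)
  right_inv x := Subtype.ext (e.symm_apply_apply x.1)

def fpDiagEquiv (X : Type) :
    X ≃ FP (fun z : Fin 1 => some z) (fun _ : X => some (0 : Fin 1)) where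
  toFun x := ⟨(0, x), ⟨0, rfl, rfl⟩⟩
  invFun p := p.1.2
  left_inv _ := rfl
  right_inv _ := Subtype.ext (Prod.ext (Subsingleton.elim _ _) rfl)

section resMap

variable {X Y Z : Type} {g : Y → Option Z} {f : X → Option Y} {z : Z}

theorem resMap_of_eq {x : pfib (pcomp g f) z} {y : Y} (hf : f x.1 = some y)
    (hg : g y = some z) : resMap g f z x = some ⟨y, hg⟩ := by
  simp [resMap, hf, hg]

theorem resMap_eq_some [Subsingleton (pfib g z)] (x : pfib (pcomp g f) z) (p : pfib g z) :
    resMap g f z x = some p := by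
  obtain ⟨y, hy, hg⟩ := Option.bind_eq_some_iff.1 x.2
  rw [resMap_of_eq hy hg, Subsingleton.elim ⟨y, hg⟩ p]

theorem resMap_graph (g : Y → Option Z) (e : X ≃ Y) (z : Z) :
    resMap g (fun x => some (e x)) z = fun x => some ((pcompGraphFiberEquiv g e z).symm x) :=
  funext fun x => resMap_of_eq (g := g) (f := fun x => some (e x)) rfl x.2

end resMap

namespace GenRing

variable (R : GenRing)

section Transport

theorem map_map {X Y Z : Type} [Finite X] [Finite Y] [Finite Z] (e : X ≃ Y) (e' : Y ≃ Z)
    (a : R.data.A X) : R.data.map e' (R.data.map e a) = R.data.map (e.trans e') a :=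
  (R.map_trans e e' a).symm

theorem map_eq_map_of_subsingleton {X Y : Type} [Finite X] [Finite Y] [Subsingleton Y]
    (e e' : X ≃ Y) (a : R.data.A X) : R.data.map e a = R.data.map e' a := by
  rw [Subsingleton.elim e e']

theorem map_eq_self_of_subsingleton {X : Type} [Finite X] [Subsingleton X] (e : X ≃ X)
    (a : R.data.A X) : R.data.map e a = a := by
  rw [R.map_eq_map_of_subsingleton e (Equiv.refl X), R.map_refl]

theorem map_heq_map_of_subsingleton {S T T' : Type} [Finite S] [Finite T] [Finite T']
    [Subsingleton T'] (h : T = T') (e : S ≃ T) (e' : S ≃ T') (a : R.data.A S) :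
    HEq (R.data.map e a) (R.data.map e' a) := by
  subst h
  exact heq_of_eq (R.map_eq_map_of_subsingleton e e' a)

theorem map_heq_map_of_val_eq {S X Y : Type} [Finite S] [Finite X]
    {f f' : X → Option Y} (h : f = f') {y : Y} (e : S ≃ pfib f y) (e' : S ≃ pfib f' y)
    (he : ∀ s, (e s).1 = (e' s).1) (a : R.data.A S) :
    HEq (R.data.map e a) (R.data.map e' a) := by
  subst h
  rw [show e = e' from Equiv.ext fun s => Subtype.ext (he s)]

theorem mul_congr_heq {X Y : Type} [Finite X] [Finite Y] {f f' : X → Option Y} (h : f = f')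
    (a : R.data.A Y) {b : ∀ y, R.data.A (pfib f y)} {b' : ∀ y, R.data.A (pfib f' y)}
    (hb : ∀ y, HEq (b y) (b' y)) : R.data.mul f a b = R.data.mul f' a b' := by
  subst h
  rw [funext fun y => eq_of_heq (hb y)]

theorem contr_congr_heq {X Y : Type} [Finite X] [Finite Y] {f f' : X → Option Y}
    (h : f = f') (a : R.data.A X) {b : ∀ y, R.data.A (pfib f y)}
    {b' : ∀ y, R.data.A (pfib f' y)} (hb : ∀ y, HEq (b y) (b' y)) :
    R.data.contr f a b = R.data.contr f' a b' := by
  subst h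
  rw [funext fun y => eq_of_heq (hb y)]

end Transport

section Units

theorem mul_graph_eq_map {P Q : Type} [Finite P] [Finite Q] (E : Q ≃ P) (f : P → Option Q)
    (hf : f = fun p => some (E.symm p)) (a : R.data.A Q) (v : ∀ q, R.data.A (pfib f q))
    (hv : ∀ q, ∃ κ : Fin 1 ≃ pfib f q, v q = R.data.map κ R.data.one) :
    R.data.mul f a v = R.data.map E a := by
  subst hf
  have hv' : v = fun q => R.data.map (equivFiberEquiv E.symm q) R.data.one := by
    funext q
    obtain ⟨κ, hκ⟩ := hv q
    have := subsingleton_pfib_graph E.symm q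
    rw [hκ, R.map_eq_map_of_subsingleton]
  rw [hv']
  exact R.map_eq_mul E a

theorem contr_graph_eq_map {P Q : Type} [Finite P] [Finite Q] (E : P ≃ Q) (f : P → Option Q)
    (hf : f = fun p => some (E p)) (a : R.data.A P) (v : ∀ q, R.data.A (pfib f q))
    (hv : ∀ q, ∃ κ : Fin 1 ≃ pfib f q, v q = R.data.map κ R.data.one) :
    R.data.contr f a v = R.data.map E a := by
  subst hf
  have hv' : v = fun q => R.data.map (equivFiberEquiv E q) R.data.one := by
    funext q
    obtain ⟨κ, hκ⟩ := hv q
    have := subsingleton_pfib_graph E q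
    rw [hκ, R.map_eq_map_of_subsingleton]
  rw [hv']
  exact R.map_eq_contr E a

theorem one_mul_eq_map {X : Type} [Finite X] (f : X → Option (Fin 1)) (hf : ∀ x, f x = some 0)
    (v : ∀ z, R.data.A (pfib f z)) :
    R.data.mul f R.data.one v = R.data.map (pfibEquivOfForall f 0 hf).symm (v 0) := by
  obtain rfl : f = fun _ => some 0 := funext hf
  have hv : v = fun z => R.data.map (constFiberEquiv X z)
      (R.data.map (pfibEquivOfForall _ 0 hf).symm (v 0)) := by
    funext z
    obtain rfl : (0 : Fin 1) = z := Subsingleton.elim _ _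
    rw [map_map, show (pfibEquivOfForall _ 0 hf).symm.trans (constFiberEquiv X 0) =
      Equiv.refl _ from Equiv.ext fun _ => rfl, R.map_refl]
  conv_lhs => rw [hv]
  exact R.one_lact X _

theorem atilde_of_eq {X Y Z : Type} [Finite X] [Finite Y] [Finite Z] (g : Z → Option Y)
    (f : X → Option Y) (a : ∀ y, R.data.A (pfib g y)) (x : X) {y : Y} (h : f x = some y) :
    R.data.atilde g f a x = R.data.map (fpFiberSnd g f h) (a y) := by
  unfold GenRingData.atilde
  split
  next y' h' =>
    obtain rfl : y = y' := Option.some.inj (h.symm.trans h')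
    rfl
  next h' => exact absurd (h'.symm.trans h) (Option.some_ne_none y).symm

theorem ctilde_of_eq {X Y Z : Type} [Finite X] [Finite Y] [Finite Z] (g : Z → Option Y)
    (f : X → Option Y) (c : ∀ y, R.data.A (pfib f y)) (z : Z) {y : Y} (h : g z = some y) :
    R.data.ctilde g f c z = R.data.map (fpFiberFst g f h) (c y) := by
  unfold GenRingData.ctilde
  split
  next y' h' =>
    obtain rfl : y = y' := Option.some.inj (h.symm.trans h')
    rfl
  next h' => exact absurd (h'.symm.trans h) (Option.some_ne_none y).symm

/-- Right-linearity reduces this to `one_mul_eq_map`: the unit at a point is `(1, 1_κ)`. -/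
theorem unit_mul_eq_map {S T : Type} [Finite S] [Finite T] (κ : Fin 1 ≃ T)
    (G : S → Option T) (hG : ∀ s, G s = some (κ 0)) (v : ∀ t, R.data.A (pfib G t)) :
    R.data.mul G (R.data.map κ R.data.one) v
      = R.data.map (pfibEquivOfForall G (κ 0) hG).symm (v (κ 0)) := by
  let k : Fin 1 → Option T := fun z => some (κ z)
  let proj : FP G k ≃ S :=
    ⟨fun p => p.1.1, fun s => ⟨(s, 0), ⟨κ 0, hG s, rfl⟩⟩,
      fun p => Subtype.ext (Prod.ext rfl (Subsingleton.elim _ _)), fun _ => rfl⟩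
  rw [← R.map_eq_contr κ R.data.one, R.right_lin G k R.data.one v,
    R.one_mul_eq_map (fpSnd G k) fun _ => congrArg some (Subsingleton.elim _ _),
    R.atilde_of_eq G k v 0 rfl, map_map]
  refine (R.contr_graph_eq_map proj (fpFst G k) rfl _ _ fun s => ?_).trans ?_
  · rw [R.ctilde_of_eq G k _ s (hG s), map_map]
    exact ⟨_, rfl⟩
  · rw [map_map]
    rfl

theorem emul_units_left {X Y Z : Type} [Finite X] [Finite Y] [Finite Z] (e : Y ≃ Z)
    (f : X → Option Y) (b : ∀ y, R.data.A (pfib f y)) (z : Z) :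
    ∃ E : pfib f (e.symm z) ≃ pfib (pcomp (fun y => some (e y)) f) z, (∀ x, (E x).1 = x.1) ∧
      R.data.emul (fun y => some (e y)) f
        (fun z => R.data.map (equivFiberEquiv e z) R.data.one) b z
        = R.data.map E (b (e.symm z)) := by
  have := subsingleton_pfib_graph e z
  have hG : ∀ x, resMap (fun y => some (e y)) f z x = some (equivFiberEquiv e z 0) :=
    fun x => resMap_eq_some x _
  exact ⟨(resFiberEquiv _ f z _).trans (pfibEquivOfForall _ _ hG).symm, fun _ => rfl,
    (R.unit_mul_eq_map _ _ hG _).trans (R.map_map _ _ _)⟩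

theorem emul_units_right {X Y Z : Type} [Finite X] [Finite Y] [Finite Z] (g : Y → Option Z)
    (e : X ≃ Y) (c : ∀ z, R.data.A (pfib g z)) (z : Z) :
    R.data.emul g (fun x => some (e x)) c
        (fun y => R.data.map (equivFiberEquiv e y) R.data.one) z
      = R.data.map (pcompGraphFiberEquiv g e z) (c z) :=
  R.mul_graph_eq_map _ _ (resMap_graph g e z) _ _ fun _ => ⟨_, R.map_map _ _ _⟩

theorem econtr_units_right {X Y Z : Type} [Finite X] [Finite Y] [Finite Z] (g : Y → Option Z)
    (e : X ≃ Y) (a : ∀ z, R.data.A (pfib (pcomp g fun x => some (e x)) z)) (z : Z) :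
    R.data.econtr g (fun x => some (e x)) a
        (fun y => R.data.map (equivFiberEquiv e y) R.data.one) z
      = R.data.map (pcompGraphFiberEquiv g e z).symm (a z) :=
  R.contr_graph_eq_map _ _ (resMap_graph g e z) _ _ fun _ => ⟨_, R.map_map _ _ _⟩

theorem mul_map_eq_map_ract {W P Q : Type} [Finite W] [Finite P] [Finite Q]
    (eQ : W ≃ Q) (eP : W ≃ P) (F : P → Option Q) (hF : F = fun p => some (eQ (eP.symm p)))
    (b : R.data.A W) (c : W → R.data.A (Fin 1)) (v : ∀ q, R.data.A (pfib F q))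
    (hv : ∀ q, ∃ κ : Fin 1 ≃ pfib F q, v q = R.data.map κ (c (eQ.symm q))) :
    R.data.mul F (R.data.map eQ b) v = R.data.map eP (R.data.ract b c) := by
  subst hF
  have hpc : pcomp (fun q => some (eQ.symm q)) (fun p => some (eQ (eP.symm p)))
      = pcomp (fun w : W => some w) (fun p => some (eP.symm p)) :=
    funext fun p => congrArg some (eQ.symm_apply_apply _)
  rw [← R.map_eq_mul eQ b, ← R.assoc, ← R.map_eq_mul eP, GenRingData.ract, ← R.assoc]
  refine R.mul_congr_heq hpc b fun w => ?_
  obtain ⟨E, -, hE⟩ := R.emul_units_left eQ.symm (fun p => some (eQ (eP.symm p))) v w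
  obtain ⟨κ, hκ⟩ := hv (eQ.symm.symm w)
  have : Subsingleton (pfib (pcomp (fun w : W => some w) (fun p => some (eP.symm p))) w) :=
    subsingleton_pfib_graph eP.symm w
  rw [hE, R.emul_units_right, hκ, Equiv.apply_symm_apply, R.map_map, R.map_map]
  exact R.map_heq_map_of_subsingleton (by rw [hpc]) _ _ _

/-- Both sides are contractions of `a` along `W → [1]`: the left one by right-adjunction,
the right one by left-adjunction. -/
theorem contr_const_map_eq_map_pair {W P T : Type} [Finite W] [Finite P] [Finite T]
    (e : W ≃ P) (κ : Fin 1 ≃ T) (F : P → Option T) (hF : ∀ p, F p = some (κ 0))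
    (a d : R.data.A W) (v : ∀ t, R.data.A (pfib F t))
    (hv : ∀ t, ∃ ξ : W ≃ pfib F t, (∀ x, (ξ x).1 = e x) ∧ v t = R.data.map ξ d) :
    R.data.contr F (R.data.map e a) v = R.data.map κ (R.data.pair a d) := by
  obtain rfl : F = fun _ => some (κ 0) := funext hF
  let c : W → Option T := fun _ => some (κ 0)
  rw [← R.map_eq_mul e a, ← R.map_eq_contr κ]
  refine (R.right_adj c (fun p => some (e.symm p)) a v _).trans
    (.trans ?_ (R.left_adj (fun z => some (κ z)) (fun _ : W => some (0 : Fin 1)) a _ _))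
  refine R.contr_congr_heq rfl a fun t => ?_
  obtain ⟨ξ, hξ, hvt⟩ := hv t
  obtain ⟨E, hE, hemul⟩ := R.emul_units_left κ (fun _ : W => some (0 : Fin 1))
    (fun z => R.data.map (constFiberEquiv W z) d) t
  refine (heq_of_eq (R.econtr_units_right c e.symm v t)).trans ?_
  rw [hvt, hemul, R.map_map]
  refine (heq_of_eq (R.map_map ξ (pcompGraphFiberEquiv c e.symm t).symm d)).trans
    (R.map_heq_map_of_val_eq rfl _ _ (fun x => ?_) d)
  show e.symm (ξ x).1 = (E _).1
  rw [hE, hξ, e.symm_apply_apply]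
  rfl

end Units

section Monoid

theorem op_one (a : R.data.A (Fin 1)) : R.data.op a R.data.one = a :=
  R.mul_one_id (Fin 1) a

theorem one_op (a : R.data.A (Fin 1)) : R.data.op R.data.one a = a := by
  rw [GenRingData.op, R.one_mul_eq_map (fun z : Fin 1 => some z)
    fun z => congrArg some (Subsingleton.elim z 0), R.map_map, R.map_eq_self_of_subsingleton]

theorem ract_ract {X : Type} [Finite X] (b : R.data.A X) (c c' : X → R.data.A (Fin 1)) :
    R.data.ract (R.data.ract b c) c' = R.data.ract b fun x => R.data.op (c x) (c' x) := by
  refine (R.assoc (fun x : X => some x) (fun x : X => some x) b _ _).symm.trans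
    (congrArg _ (funext fun x => ?_))
  have := subsingleton_pfib_of_injective (Option.some_injective X) x
  refine R.mul_map_eq_map_ract (idFiberEquiv x) (idFiberEquiv x)
    (resMap (fun x : X => some x) (fun x : X => some x) x) (funext fun p => resMap_eq_some p _) (c x) (fun _ => c' x) _ fun p =>
      ⟨(idFiberEquiv p.1).trans (resFiberEquiv (fun x : X => some x) (fun x : X => some x) x p),
        ?_⟩
  obtain ⟨y, hy⟩ := p
  obtain rfl : y = x := Option.some.inj hy
  exact R.map_map _ _ _

theorem op_assoc (a b c : R.data.A (Fin 1)) :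
    R.data.op (R.data.op a b) c = R.data.op a (R.data.op b c) :=
  R.ract_ract a (fun _ => b) (fun _ => c)

theorem pair_one (a : R.data.A (Fin 1)) : R.data.pair a R.data.one = a :=
  (R.contr_graph_eq_map (Equiv.refl (Fin 1)) _
    (funext fun z => congrArg some (Subsingleton.elim _ z)) a _ fun _ => ⟨_, rfl⟩).trans
    (R.map_refl _ a)

theorem lact_one (s : R.data.A (Fin 1)) : R.data.lact s R.data.one = s :=
  (R.mul_graph_eq_map (Equiv.refl (Fin 1)) _
    (funext fun z => congrArg some (Subsingleton.elim _ z)) s _ fun _ => ⟨_, rfl⟩).trans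
    (R.map_refl _ s)

theorem contr_id_eq_pair (s a : R.data.A (Fin 1)) :
    R.data.contr (fun z : Fin 1 => some z) s (fun z => R.data.map (idFiberEquiv z) a)
      = R.data.pair s a := by
  have hf : (fun z : Fin 1 => some z) = fun _ => some 0 :=
    funext fun z => congrArg some (Subsingleton.elim z 0)
  refine R.contr_congr_heq hf s fun z => R.map_heq_map_of_subsingleton (by rw [hf]) _ _ a

theorem econtr_const_const {X : Type} [Finite X] (d d' : R.data.A X) :
    R.data.econtr (fun z : Fin 1 => some z) (fun _ : X => some (0 : Fin 1))
      (fun z => R.data.map (constFiberEquiv X z) d) (fun z => R.data.map (constFiberEquiv X z) d')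
    = fun z => R.data.map (idFiberEquiv z) (R.data.pair d d') := by
  funext z
  have : Subsingleton (pfib (fun z : Fin 1 => some z) z) :=
    subsingleton_pfib_of_injective (Option.some_injective _) z
  exact R.contr_const_map_eq_map_pair (constFiberEquiv X z) (idFiberEquiv z)
    (resMap (fun z : Fin 1 => some z) (fun _ : X => some (0 : Fin 1)) z)
    (fun p => resMap_eq_some (g := fun z : Fin 1 => some z) (f := fun _ : X => some 0) p _) d d' _ fun t => ⟨(constFiberEquiv X t.1).trans
      (resFiberEquiv (fun z : Fin 1 => some z) (fun _ : X => some (0 : Fin 1)) z t),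
      fun _ => rfl, R.map_map _ _ _⟩

theorem op_pair_eq_pair_lact (s : R.data.A (Fin 1)) {X : Type} [Finite X] (d d' : R.data.A X) :
    R.data.op s (R.data.pair d d') = R.data.pair (R.data.lact s d) d' := by
  rw [GenRingData.op, ← econtr_const_const]
  exact (R.left_lin (fun z : Fin 1 => some z) (fun _ : X => some (0 : Fin 1)) s _ _).symm

theorem pair_lact (s : R.data.A (Fin 1)) {X : Type} [Finite X] (d d' : R.data.A X) :
    R.data.pair (R.data.lact s d') d = R.data.pair s (R.data.pair d d') := by
  refine (R.right_adj (fun z : Fin 1 => some z) (fun _ : X => some (0 : Fin 1)) s _ _).trans ?_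
  exact (congrArg _ (R.econtr_const_const d d')).trans (R.contr_id_eq_pair s _)

theorem adj_adj (a : R.data.A (Fin 1)) : R.data.adj (R.data.adj a) = a := by
  rw [GenRingData.adj, GenRingData.adj, ← pair_lact, R.one_lact, pair_one]

theorem op_adj (s a : R.data.A (Fin 1)) : R.data.op s (R.data.adj a) = R.data.pair s a := by
  rw [GenRingData.adj, op_pair_eq_pair_lact, lact_one]

theorem op_pair_eq_pair_ract {X : Type} [Finite X] (d d' : R.data.A X) (t : R.data.A (Fin 1)) :
    R.data.op (R.data.pair d d') t = R.data.pair (R.data.ract d fun _ => t) d' := by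
  let g : Fin 1 → Option (Fin 1) := fun z => some z
  let f : X → Option (Fin 1) := fun _ => some 0
  have hmul : R.data.mul (fpSnd g f) d
      (R.data.atilde g f fun z => R.data.map (idFiberEquiv z) t)
      = R.data.map (fpDiagEquiv X) (R.data.ract d fun _ => t) := by
    conv_lhs => rw [← R.map_refl X d]
    exact R.mul_map_eq_map_ract (Equiv.refl X) (fpDiagEquiv X) _ rfl d _ _ fun q =>
      ⟨(idFiberEquiv 0).trans (fpFiberSnd g f (x := q) rfl),
        by rw [R.atilde_of_eq g f _ q rfl, R.map_map]; rfl⟩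
  refine (R.right_lin g f d _ _).trans ?_
  rw [hmul]
  refine (R.contr_const_map_eq_map_pair (fpDiagEquiv X) (Equiv.refl (Fin 1)) (fpFst g f)
    (fun p => congrArg some (Subsingleton.elim _ _)) _ d' _ fun z =>
      ⟨(constFiberEquiv X z).trans (fpFiberFst g f (rfl : g z = some z)),
        fun _ => Subtype.ext (Prod.ext (Subsingleton.elim _ _) rfl),
        by rw [R.ctilde_of_eq g f _ z rfl, R.map_map]⟩).trans (R.map_refl _ _)

theorem adj_op (a t : R.data.A (Fin 1)) : R.data.op (R.data.adj a) t = R.data.pair t a := by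
  rw [GenRingData.adj, op_pair_eq_pair_ract]
  exact congrArg (R.data.pair · a) (R.one_op t)

theorem op_comm (s t : R.data.A (Fin 1)) : R.data.op s t = R.data.op t s := by
  rw [← R.adj_adj t, op_adj, adj_op]

theorem opPow_one (x : R.data.A (Fin 1)) : R.data.opPow x 1 = x :=
  R.op_one x

theorem opPow_add (x : R.data.A (Fin 1)) (m n : ℕ) :
    R.data.opPow x (m + n) = R.data.op (R.data.opPow x m) (R.data.opPow x n) := by
  induction m with
  | zero => rw [Nat.zero_add]; exact (R.one_op _).symm
  | succ m ih =>
    rw [Nat.succ_add]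
    exact (congrArg (R.data.op x) ih).trans (R.op_assoc _ _ _).symm

end Monoid

section HIdeal

variable {R}

def colon (I : Set (R.data.A (Fin 1))) (u : R.data.A (Fin 1)) : Set (R.data.A (Fin 1)) :=
  {t | R.data.op t u ∈ I}

namespace IsHIdeal

variable {I : Set (R.data.A (Fin 1))}

theorem op_mem_right (hI : R.IsHIdeal I) (t : R.data.A (Fin 1)) {m : R.data.A (Fin 1)}
    (hm : m ∈ I) : R.data.op t m ∈ I := by
  have h := hI (Fin 1) t R.data.one (fun _ => m) fun _ => hm
  rwa [R.pair_one] at h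

theorem op_mem_left (hI : R.IsHIdeal I) {m : R.data.A (Fin 1)} (hm : m ∈ I)
    (t : R.data.A (Fin 1)) : R.data.op m t ∈ I :=
  R.op_comm t m ▸ hI.op_mem_right t hm

theorem colon (hI : R.IsHIdeal I) (u : R.data.A (Fin 1)) :
    R.IsHIdeal (R.colon I u) := by
  intro X _ b d c hc
  show R.data.op _ u ∈ I
  rw [R.op_pair_eq_pair_ract, R.ract_ract]
  exact hI X b d _ hc

theorem subset_colon (hI : R.IsHIdeal I) (u : R.data.A (Fin 1)) : I ⊆ R.colon I u :=
  fun _ hm => hI.op_mem_left hm u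

end IsHIdeal

theorem isHIdeal_sUnion {c : Set (Set (R.data.A (Fin 1)))} (hc : ∀ I ∈ c, R.IsHIdeal I)
    (hchain : IsChain (· ⊆ ·) c) (hne : c.Nonempty) : R.IsHIdeal (⋃₀ c) := by
  intro X _ b d e he
  obtain ⟨I, hIc, hI⟩ := hchain.directedOn.exists_mem_subset_of_finite_of_subset_sUnion hne
    (Set.finite_range e) (Set.range_subset_iff.2 he)
  exact ⟨I, hIc, hc I hIc X b d e fun x => hI ⟨x, rfl⟩⟩

theorem IsPrimeH.mem_of_opPow_mem {P : Set (R.data.A (Fin 1))} (hP : R.IsPrimeH P)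
    {x : R.data.A (Fin 1)} : ∀ {n : ℕ}, 0 < n → R.data.opPow x n ∈ P → x ∈ P
  | 1, _, h => by rwa [R.opPow_one] at h
  | n + 2, _, h => (hP.2.2 _ _ h).elim id (hP.mem_of_opPow_mem n.succ_pos)

def IsHIdealAvoidingPowers (x : R.data.A (Fin 1)) (I : Set (R.data.A (Fin 1))) : Prop :=
  R.IsHIdeal I ∧ ∀ n, 0 < n → R.data.opPow x n ∉ I

theorem exists_opPow_op_mem_of_maximal {x : R.data.A (Fin 1)} {M : Set (R.data.A (Fin 1))}
    (hM : Maximal (IsHIdealAvoidingPowers x) M) {t u : R.data.A (Fin 1)} (ht : t ∉ M)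
    (htu : R.data.op t u ∈ M) : ∃ n, 0 < n ∧ R.data.op (R.data.opPow x n) u ∈ M := by
  by_contra! h
  exact ht (hM.2 ⟨hM.1.1.colon u, h⟩ (hM.1.1.subset_colon u) htu)

theorem isPrimeH_of_maximal {x : R.data.A (Fin 1)} {M : Set (R.data.A (Fin 1))}
    (hM : Maximal (IsHIdealAvoidingPowers x) M) : R.IsPrimeH M := by
  refine ⟨hM.1.1, fun h => hM.1.2 1 one_pos (hM.1.1.op_mem_right x h), fun u v huv => ?_⟩
  by_contra! huvM
  obtain ⟨n, hn, hxnv⟩ := exists_opPow_op_mem_of_maximal hM huvM.1 huv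
  obtain ⟨m, hm, hxmn⟩ :=
    exists_opPow_op_mem_of_maximal hM huvM.2 (R.op_comm _ v ▸ hxnv)
  exact hM.1.2 (m + n) (by omega) (R.opPow_add x m n ▸ hxmn)

theorem exists_isPrimeH_of_forall_opPow_not_mem {a : Set (R.data.A (Fin 1))}
    (ha : R.IsHIdeal a) {x : R.data.A (Fin 1)} (hx : ∀ n, 0 < n → R.data.opPow x n ∉ a) :
    ∃ P, R.IsPrimeH P ∧ a ⊆ P ∧ x ∉ P := by
  obtain ⟨M, haM, hM⟩ := zorn_subset_nonempty {I | IsHIdealAvoidingPowers x I}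
    (fun c hcS hchain hne => ⟨⋃₀ c,
      ⟨isHIdeal_sUnion (fun I hI => (hcS hI).1) hchain hne,
        fun n hn ⟨I, hIc, hxI⟩ => (hcS hIc).2 n hn hxI⟩,
      fun _ => Set.subset_sUnion_of_mem⟩) a ⟨ha, hx⟩
  exact ⟨M, isPrimeH_of_maximal hM, haM, fun hxM => hM.1.2 1 one_pos (by rwa [R.opPow_one])⟩

end HIdeal

end GenRing

/-- **`I(V(𝔞)) = √𝔞`.**  For any generalized ring `R` and any `h`-ideal `𝔞`, the
intersection of all prime `h`-ideals containing `𝔞` equals the radical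
`√𝔞 = {a : aⁿ ∈ 𝔞 for some n > 0}`. -/
theorem iInter_zeroLocus_eq_radical (R : GenRing) (a : Set (R.data.A (Fin 1)))
    (ha : R.IsHIdeal a) :
    (⋂ p ∈ R.zeroLocus a, SpecG.I p) = {x | ∃ n, 0 < n ∧ R.data.opPow x n ∈ a} := by
  ext x
  simp only [Set.mem_iInter, Set.mem_ofPred_eq]
  constructor
  · intro hx
    by_contra! hxa
    obtain ⟨P, hP, haP, hxP⟩ := R.exists_isPrimeH_of_forall_opPow_not_mem ha hxa
    exact hxP (hx ⟨P, hP⟩ haP)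
  · rintro ⟨n, hn, hxn⟩ p hp
    exact p.prime.mem_of_opPow_mem hn (hp hxn)

end
end

section
/- For any generalized ring A and any a ∈ A_{[1]}, the basic open set D_a ⊆ spec(A) is quasi-compact: every cover of D_a by basic open sets D_{g_i} admits a finite subcover. In particular spec(A) = D_1 is quasi-compact. -/
open scoped Classical

noncomputable section

/-! A prime `𝔭` is recorded by its indicator function `A_{[1]} → Bool`. Every condition in the
definition of a prime involves only finitely many coordinates of this function at a time (here
the finiteness of `X` in the `h`-ideal condition matters), so the indicators of the primes
avoiding `a` form a closed, hence compact, subset of the Boolean cube. Sending an indicator to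
its prime is continuous for the Zariski topology, since the preimage of `D_t` is the coordinate
condition `P t = false`; so `D_a` is quasi-compact as a continuous image, and `spec = D_1`. -/

section BooleanCube

variable {α : Type*}

theorem isClopen_setOf_apply_eq (t : α) (b : Bool) : IsClopen {P : α → Bool | P t = b} :=
  (isClopen_discrete {b}).preimage (continuous_apply t)

theorem isOpen_setOf_forall_apply_eq_true {X : Type*} [Finite X] (c : X → α) :
    IsOpen {P : α → Bool | ∀ x, P (c x) = true} := by
  simp only [Set.ofPred_forall]
  exact isOpen_iInter_of_finite fun x => (isClopen_setOf_apply_eq (c x) true).isOpen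

end BooleanCube

namespace GenRing

variable (R : GenRing)

theorem isOpen_basicOpen (a : R.data.A (Fin 1)) : IsOpen (R.basicOpen a) :=
  TopologicalSpace.isOpen_generateFrom_of_mem ⟨a, rfl⟩

theorem basicOpen_one : R.basicOpen R.data.one = Set.univ :=
  Set.eq_univ_of_forall fun p => p.prime.2.1

theorem isClosed_setOf_isPrimeH :
    IsClosed {P : R.data.A (Fin 1) → Bool | R.IsPrimeH {t | P t = true}} := by
  have coord (t : R.data.A (Fin 1)) := isClopen_setOf_apply_eq t true
  have isHIdeal : IsClosed {P : R.data.A (Fin 1) → Bool | R.IsHIdeal {t | P t = true}} := by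
    simp only [IsHIdeal, Set.mem_ofPred_eq, Set.ofPred_forall]
    exact isClosed_iInter fun X => isClosed_iInter fun _ => isClosed_iInter fun _ =>
      isClosed_iInter fun _ => isClosed_iInter fun c =>
        isClosed_imp (isOpen_setOf_forall_apply_eq_true c) (coord _).isClosed
  have proper : IsClosed {P : R.data.A (Fin 1) → Bool | R.data.one ∉ {t | P t = true}} :=
    (coord _).isOpen.isClosed_compl
  have prime : IsClosed {P : R.data.A (Fin 1) → Bool | ∀ u v, P (R.data.op u v) = true →
      P u = true ∨ P v = true} := by
    simp only [Set.ofPred_forall]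
    exact isClosed_iInter fun u => isClosed_iInter fun v =>
      isClosed_imp (coord _).isOpen ((coord u).isClosed.union (coord v).isClosed)
  exact isHIdeal.and (proper.and prime)

def primeCube (a : R.data.A (Fin 1)) : Set (R.data.A (Fin 1) → Bool) :=
  {P | R.IsPrimeH {t | P t = true} ∧ P a = false}

theorem isClosed_primeCube (a : R.data.A (Fin 1)) : IsClosed (R.primeCube a) :=
  (R.isClosed_setOf_isPrimeH).inter (isClopen_setOf_apply_eq a false).isClosed

def primeCubeToSpec (a : R.data.A (Fin 1)) (P : R.primeCube a) : SpecG R :=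
  ⟨{t | P.1 t = true}, P.2.1⟩

theorem continuous_primeCubeToSpec (a : R.data.A (Fin 1)) :
    Continuous (R.primeCubeToSpec a) := by
  refine continuous_generateFrom_iff.2 ?_
  rintro _ ⟨t, rfl⟩
  exact (isClopen_setOf_apply_eq t true).isClosed.isOpen_compl.preimage continuous_subtype_val

theorem range_primeCubeToSpec (a : R.data.A (Fin 1)) :
    Set.range (R.primeCubeToSpec a) = R.basicOpen a := by
  ext p
  constructor
  · rintro ⟨P, rfl⟩
    simp [primeCubeToSpec, basicOpen, P.2.2]
  · intro hp
    have indicator : {t | decide (t ∈ p.I) = true} = p.I := by simp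
    refine ⟨⟨fun t => decide (t ∈ p.I), by rw [indicator]; exact p.prime, decide_eq_false hp⟩, ?_⟩
    simp only [primeCubeToSpec, indicator]

theorem isCompact_basicOpen (a : R.data.A (Fin 1)) : IsCompact (R.basicOpen a) := by
  have : CompactSpace (R.primeCube a) :=
    isCompact_iff_compactSpace.1 (R.isClosed_primeCube a).isCompact
  rw [← R.range_primeCubeToSpec a]
  exact isCompact_range (R.continuous_primeCubeToSpec a)

end GenRing

/-- **Quasi-compactness of the basic open sets.**  For any generalized ring `R` and any
`a ∈ A_{[1]}`, every cover of the basic open set `D_a` by basic open sets `D_{g i}`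
admits a finite subcover; in particular `spec(R) = D_1` is quasi-compact. -/
theorem basicOpen_compact (R : GenRing) (a : R.data.A (Fin 1)) :
    (∀ (ι : Type) (g : ι → R.data.A (Fin 1)),
        R.basicOpen a ⊆ ⋃ i, R.basicOpen (g i) →
        ∃ s : Finset ι, R.basicOpen a ⊆ ⋃ i ∈ s, R.basicOpen (g i)) ∧
      IsCompact (Set.univ : Set (SpecG R)) :=
  ⟨fun _ g hcover => (R.isCompact_basicOpen a).elim_finite_subcover _
      (fun i => R.isOpen_basicOpen (g i)) hcover,
    R.basicOpen_one ▸ R.isCompact_basicOpen R.data.one⟩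
end
end
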